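/- arXiv:1806.03153 — 3 statements merged into one kernel-verified Lean document; each statement's English description precedes it below -/
import Mathlib

section
/- Let β ∈ ℝ^{m×m}, ψ ∈ ℝ^m, and suppose ker{ψᵀ exp(βτ) : τ ≥ 0} = {0}, i.e., the only ξ ∈ ℝ^m with ψᵀ exp(βτ) ξ = 0 for all τ ≥ 0 is ξ = 0. Then there exist 0 ≤ τ₁ < τ₂ < ⋯ < τ_m such that the row vectors ψᵀ exp(β τ₁), …, ψᵀ exp(β τ_m) are linearly independent in ℝ^{1×m}. -/
open Matrix

/-!
The row vectors `ψᵀ exp(βτ)`, `τ ≥ 0`, span `ℝ^m`: a linear functional vanishing on all of them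
is `x ↦ x ⬝ᵥ ξ` for some `ξ` in the kernel, hence zero. A linearly independent spanning subset
of them has `m` elements, and listing its parameters `τ` in increasing order gives the times.
-/

theorem Matrix.span_eq_top_of_forall_dotProduct_eq_zero {K n : Type*} [Field K] [Fintype n]
    {S : Set (n → K)} (hS : ∀ ξ : n → K, (∀ v ∈ S, v ⬝ᵥ ξ = 0) → ξ = 0) :
    Submodule.span K S = ⊤ := by
  classical
  rw [← Submodule.dualAnnihilator_eq_bot_iff, eq_bot_iff]
  intro f hf
  rw [Submodule.mem_dualAnnihilator] at hf
  obtain ⟨ξ, rfl⟩ := (dotProductEquiv K n).surjective f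
  have hξ : ξ = 0 := hS ξ fun v hv => by
    rw [dotProduct_comm]
    exact hf v (Submodule.subset_span hv)
  simp [hξ]

theorem exists_strictMono_linearIndependent_of_span_image_eq_top {K V α : Type*} [Field K]
    [AddCommGroup V] [Module K V] [FiniteDimensional K V] [LinearOrder α] {n : ℕ}
    (hn : Module.finrank K V = n) (g : α → V) (s : Set α) (hs : Submodule.span K (g '' s) = ⊤) :
    ∃ t : Fin n → α, (∀ i, t i ∈ s) ∧ StrictMono t ∧ LinearIndependent K (g ∘ t) := by
  obtain ⟨b, hbs, -, hspan, hli⟩ :=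
    exists_linearIndepOn_extension (linearIndepOn_empty K g) (Set.empty_subset s)
  have hspan_b : Submodule.span K (Set.range fun x : b => g x) = ⊤ := by
    rw [← Set.image_eq_range, eq_top_iff, ← hs]
    exact Submodule.span_le.2 hspan
  let B : Module.Basis b K V := .mk hli hspan_b.ge
  have : Finite b := Module.Finite.finite_basis B
  have := Fintype.ofFinite b
  let e : Fin n ≃o b := Fintype.orderIsoFinOfCardEq b (hn ▸ (Module.finrank_eq_card_basis B).symm)
  exact ⟨fun i => e i, fun i => hbs (e i).2, fun i j hij => e.strictMono hij,
    hli.comp e e.injective⟩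

/-- If the term structure kernel is zero, there exist `0 ≤ τ₁ < ⋯ < τ_m` such that
the row vectors `ψᵀ exp(β τᵢ)` are linearly independent. -/
theorem stmt_7 {m : ℕ} (β : Matrix (Fin m) (Fin m) ℝ) (ψ : Fin m → ℝ)
    (hker : ∀ ξ : Fin m → ℝ,
      (∀ τ ≥ (0 : ℝ), ψ ⬝ᵥ (NormedSpace.exp (τ • β)).mulVec ξ = 0) → ξ = 0) :
    ∃ τ : Fin m → ℝ, (∀ i, 0 ≤ τ i) ∧ StrictMono τ ∧
      LinearIndependent ℝ (fun i => Matrix.vecMul ψ (NormedSpace.exp (τ i • β))) := by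
  have hspan : Submodule.span ℝ
      ((fun τ : ℝ => ψ ᵥ* NormedSpace.exp (τ • β)) '' Set.Ici 0) = ⊤ := by
    refine span_eq_top_of_forall_dotProduct_eq_zero fun ξ hξ => hker ξ fun τ hτ => ?_
    rw [dotProduct_mulVec]
    exact hξ _ ⟨τ, hτ, rfl⟩
  exact exists_strictMono_linearIndependent_of_span_image_eq_top
    (Module.finrank_fin_fun ℝ) _ _ hspan
end

section
/- Let β ∈ ℝ^{m×m}, and let P₁ ∈ ℝ^{m′×m}, P₂ ∈ ℝ^{n′×m}, Q₁ ∈ ℝ^{m×m′}, Q₂ ∈ ℝ^{m×n′} satisfy P₁Q₁ = Id_{m′}, Q₁P₁ + Q₂P₂ = Id_m, P₁ β^k Q₂ = 0 for all k ≥ 0, and ψᵀ Q₂ = 0 for a given ψ ∈ ℝ^m. Define ψ′ = Q₁ᵀψ and β′ = P₁βQ₁. If ξ′ ∈ ℝ^{m′} satisfies ψ′ᵀ exp(β′τ) ξ′ = 0 for all τ ≥ 0, and moreover ker{ψᵀ exp(βτ) : τ ≥ 0} ⊆ ker P₁ and ker{ψᵀ exp(βτ) : τ ≥ 0} ⊆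 ker ψᵀ, then ξ′ = 0. -/
/-!
Because `P₁ β^k Q₂ = 0` and `Q₁P₁ + Q₂P₂ = 1`, we get `P₁ β^k Q₁ P₁ = P₁ β^k`, so compression
`X ↦ P₁ X Q₁` is multiplicative on powers of `β`: `(P₁βQ₁)^k = P₁β^kQ₁`, and summing the exponential
series, `exp (τβ′) = P₁ exp (τβ) Q₁`. Since `ψᵀQ₂ = 0` gives `ψᵀQ₁P₁ = ψᵀ`, this yields
`ψᵀ exp (τβ) Q₁ξ′ = ψ′ᵀ exp (τβ′) ξ′ = 0` for all `τ ≥ 0`, so `Q₁ξ′` lies in the kernel and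
`ξ′ = P₁Q₁ξ′ = 0`.
-/

open Matrix NormedSpace

theorem ContinuousLinearMap.map_exp_of_map_pow {𝕂 𝔸 𝔹 : Type*} [RCLike 𝕂]
    [NormedRing 𝔸] [NormedAlgebra 𝕂 𝔸] [CompleteSpace 𝔸]
    [NormedRing 𝔹] [NormedAlgebra 𝕂 𝔹] [CompleteSpace 𝔹]
    (L : 𝔸 →L[𝕂] 𝔹) {a : 𝔸} {b : 𝔹} (h : ∀ n : ℕ, L (a ^ n) = b ^ n) :
    L (exp a) = exp b := by
  have hL := (exp_series_hasSum_exp' (𝕂 := 𝕂) a).mapL L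
  simp only [map_smul, h] at hL
  exact hL.unique (exp_series_hasSum_exp' b)

namespace Matrix

variable {m n R : Type*} [Fintype m] [Fintype n] [DecidableEq m] [DecidableEq n]

theorem mul_mul_pow_eq_mul_pow_mul [Semiring R] {P : Matrix n m R} {A : Matrix m m R} {Q : Matrix m n R}
    (hPQ : P * Q = 1) (hA : ∀ k : ℕ, P * A ^ k * (Q * P) = P * A ^ k) (k : ℕ) :
    (P * A * Q) ^ k = P * A ^ k * Q := by
  induction k with
  | zero => simp [hPQ]
  | succ k ih =>
    calc (P * A * Q) ^ (k + 1) = P * A ^ k * (Q * P) * A * Q := by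
          rw [pow_succ, ih]; simp only [Matrix.mul_assoc]
      _ = P * A ^ (k + 1) * Q := by rw [hA, pow_succ, Matrix.mul_assoc P]

attribute [local instance] Matrix.linftyOpNormedRing Matrix.linftyOpNormedAlgebra in
theorem exp_mul_mul_eq_mul_exp_mul {𝕂 : Type*} [RCLike 𝕂] (P : Matrix n m 𝕂) (A : Matrix m m 𝕂)
    (Q : Matrix m n 𝕂) (h : ∀ k : ℕ, (P * A * Q) ^ k = P * A ^ k * Q) :
    exp (P * A * Q) = P * exp A * Q := by
  let L : Matrix m m 𝕂 →L[𝕂] Matrix n n 𝕂 :=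
    { toFun := fun X => P * X * Q
      map_add' := fun X Y => by simp only [Matrix.mul_add, Matrix.add_mul]
      map_smul' := fun c X => by simp only [Matrix.mul_smul, Matrix.smul_mul, RingHom.id_apply]
      cont := by fun_prop }
  exact (L.map_exp_of_map_pow (a := A) fun k => (h k).symm).symm

end Matrix

theorem stmt_10_general {m m' n' : ℕ} (β : Matrix (Fin m) (Fin m) ℝ) (ψ : Fin m → ℝ)
    (P₁ : Matrix (Fin m') (Fin m) ℝ) (P₂ : Matrix (Fin n') (Fin m) ℝ)
    (Q₁ : Matrix (Fin m) (Fin m') ℝ) (Q₂ : Matrix (Fin m) (Fin n') ℝ)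
    (hPQ1 : P₁ * Q₁ = 1)
    (hQP : Q₁ * P₁ + Q₂ * P₂ = 1)
    (hP1Q2 : ∀ k : ℕ, P₁ * β ^ k * Q₂ = 0)
    (hψQ2 : Matrix.vecMul ψ Q₂ = 0)
    (ψ' : Fin m' → ℝ) (hψ' : ψ' = Q₁ᵀ.mulVec ψ)
    (β' : Matrix (Fin m') (Fin m') ℝ) (hβ' : β' = P₁ * β * Q₁)
    (hkerP1 : ∀ u : Fin m → ℝ,
      (∀ τ ≥ (0 : ℝ), ψ ⬝ᵥ (NormedSpace.exp (τ • β)).mulVec u = 0) → P₁.mulVec u = 0)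
    (ξ' : Fin m' → ℝ)
    (hξ' : ∀ τ ≥ (0 : ℝ), ψ' ⬝ᵥ (NormedSpace.exp (τ • β')).mulVec ξ' = 0) :
    ξ' = 0 := by
  have hQ₁P₁ : Q₁ * P₁ = 1 - Q₂ * P₂ := eq_sub_of_add_eq hQP
  have hψ : ψ ᵥ* (Q₁ * P₁) = ψ := by
    rw [hQ₁P₁, vecMul_sub, ← vecMul_vecMul, hψQ2, zero_vecMul, vecMul_one, sub_zero]
  have hexp (τ : ℝ) : exp (τ • β') = P₁ * exp (τ • β) * Q₁ := by
    have hinv (k : ℕ) : P₁ * (τ • β) ^ k * (Q₁ * P₁) = P₁ * (τ • β) ^ k := by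
      rw [hQ₁P₁, Matrix.mul_sub, Matrix.mul_one, smul_pow, Matrix.mul_smul, Matrix.smul_mul,
        ← Matrix.mul_assoc, hP1Q2, Matrix.zero_mul, smul_zero, sub_zero]
    rw [hβ', ← Matrix.smul_mul, ← Matrix.mul_smul]
    exact exp_mul_mul_eq_mul_exp_mul _ _ _ (mul_mul_pow_eq_mul_pow_mul hPQ1 hinv)
  have hker : ∀ τ ≥ (0 : ℝ), ψ ⬝ᵥ exp (τ • β) *ᵥ (Q₁ *ᵥ ξ') = 0 := by
    intro τ hτ
    have := hξ' τ hτ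
    rwa [hexp, hψ', mulVec_transpose, ← mulVec_mulVec, ← mulVec_mulVec, dotProduct_mulVec,
      vecMul_vecMul, hψ] at this
  calc ξ' = P₁ *ᵥ (Q₁ *ᵥ ξ') := by rw [mulVec_mulVec, hPQ1, one_mulVec]
    _ = 0 := hkerP1 _ hker

/-- The reduced model `(β′, ψ′) = (P₁βQ₁, Q₁ᵀψ)` has zero term structure kernel. -/
theorem stmt_10 {m m' n' : ℕ} (β : Matrix (Fin m) (Fin m) ℝ) (ψ : Fin m → ℝ)
    (P₁ : Matrix (Fin m') (Fin m) ℝ) (P₂ : Matrix (Fin n') (Fin m) ℝ)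
    (Q₁ : Matrix (Fin m) (Fin m') ℝ) (Q₂ : Matrix (Fin m) (Fin n') ℝ)
    (hPQ1 : P₁ * Q₁ = 1)
    (hQP : Q₁ * P₁ + Q₂ * P₂ = 1)
    (hP1Q2 : ∀ k : ℕ, P₁ * β ^ k * Q₂ = 0)
    (hψQ2 : Matrix.vecMul ψ Q₂ = 0)
    (ψ' : Fin m' → ℝ) (hψ' : ψ' = Q₁ᵀ.mulVec ψ)
    (β' : Matrix (Fin m') (Fin m') ℝ) (hβ' : β' = P₁ * β * Q₁)
    (hkerP1 : ∀ u : Fin m → ℝ,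
      (∀ τ ≥ (0 : ℝ), ψ ⬝ᵥ (NormedSpace.exp (τ • β)).mulVec u = 0) → P₁.mulVec u = 0)
    (hkerψ : ∀ u : Fin m → ℝ,
      (∀ τ ≥ (0 : ℝ), ψ ⬝ᵥ (NormedSpace.exp (τ • β)).mulVec u = 0) → ψ ⬝ᵥ u = 0)
    (ξ' : Fin m' → ℝ)
    (hξ' : ∀ τ ≥ (0 : ℝ), ψ' ⬝ᵥ (NormedSpace.exp (τ • β')).mulVec ξ' = 0) :
    ξ' = 0 :=
  stmt_10_general β ψ P₁ P₂ Q₁ Q₂ hPQ1 hQP hP1Q2 hψQ2 ψ' hψ' β' hβ' hkerP1 ξ' hξ'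
end

section
/- Let β ∈ ℝ^{m×m}, c ∈ ℝ^m, v ∈ ℝ^m, and let F : [0,∞) → ℝ^{1×m} be continuously differentiable with F′(T) = F(T)β − (F(T)β c)·F(T) for all T ≥ 0. If F(T) → vᵀ as T → ∞, then vᵀβ = λ vᵀ where λ = vᵀβ c; i.e., v is a left eigenvector of β with real eigenvalue λ = vᵀβc. -/
open Matrix Filter

/-- If a real function converges and its derivative (valid on `[1,∞)`) also converges,
then the derivative's limit is zero. -/
lemma deriv_limit_zero (f g : ℝ → ℝ) (L l : ℝ)
    (h : ∀ t : ℝ, 1 ≤ t → HasDerivAt f (g t) t)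
    (hf : Tendsto f atTop (nhds L)) (hg : Tendsto g atTop (nhds l)) : l = 0 := by
  have key : ∀ n : ℕ, ∃ ξ ∈ Set.Ioo ((n : ℝ) + 1) ((n : ℝ) + 2),
      g ξ = (f ((n : ℝ) + 2) - f ((n : ℝ) + 1)) / (((n : ℝ) + 2) - ((n : ℝ) + 1)) := by
    intro n
    apply exists_hasDerivAt_eq_slope f g (by linarith)
    · intro x hx
      exact (h x (by simp at hx; linarith [hx.1] : (1:ℝ) ≤ x)).continuousAt.continuousWithinAt
    · intro x hx
      exact h x (by linarith [hx.1])
  choose ξ hξmem hξval using key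
  have hξtop : Tendsto ξ atTop atTop := by
    apply tendsto_atTop_mono (fun n => le_of_lt (hξmem n).1)
    exact tendsto_atTop_add_const_right _ 1 tendsto_natCast_atTop_atTop
  have h1 : Tendsto (fun n => g (ξ n)) atTop (nhds l) := hg.comp hξtop
  have h2 : Tendsto (fun n => g (ξ n)) atTop (nhds 0) := by
    have e1 : Tendsto (fun n : ℕ => f ((n : ℝ) + 2)) atTop (nhds L) :=
      hf.comp (tendsto_atTop_add_const_right _ 2 tendsto_natCast_atTop_atTop)
    have e2 : Tendsto (fun n : ℕ => f ((n : ℝ) + 1)) atTop (nhds L) :=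
      hf.comp (tendsto_atTop_add_const_right _ 1 tendsto_natCast_atTop_atTop)
    have := (e1.sub e2)
    rw [sub_self] at this
    apply this.congr
    intro n
    rw [hξval n]
    ring
  exact tendsto_nhds_unique h1 h2

/-- If `F` solves the Riccati-type ODE `F′ = Fβ − (Fβc)·F` on `[0,∞)` and `F(T) → vᵀ`
as `T → ∞`, then `v` is a left eigenvector of `β` with eigenvalue `λ = vᵀβc`. -/
theorem stmt_16 {m : ℕ} (β : Matrix (Fin m) (Fin m) ℝ) (c v : Fin m → ℝ)
    (F : ℝ → (Fin m → ℝ))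
    (hF : ∀ T ∈ Set.Ici (0 : ℝ), HasDerivWithinAt F
      (Matrix.vecMul (F T) β - (F T ⬝ᵥ β.mulVec c) • F T) (Set.Ici 0) T)
    (hlim : Tendsto F atTop (nhds v)) :
    Matrix.vecMul v β = (v ⬝ᵥ β.mulVec c) • v := by
  set G : (Fin m → ℝ) → (Fin m → ℝ) :=
    fun x => Matrix.vecMul x β - (x ⬝ᵥ β.mulVec c) • x with hGdef
  have hGcont : Continuous G := by
    apply Continuous.sub
    · exact continuous_id.matrix_vecMul continuous_const
    · exact (continuous_id.dotProduct continuous_const).smul continuous_id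
  have hGlim : Tendsto (fun t => G (F t)) atTop (nhds (G v)) :=
    (hGcont.tendsto v).comp hlim
  have hderiv : ∀ t : ℝ, 1 ≤ t → HasDerivAt F (G (F t)) t := by
    intro t ht
    exact (hF t (Set.mem_Ici.mpr (by linarith))).hasDerivAt (Ici_mem_nhds (by linarith))
  have hzero : G v = 0 := by
    funext i
    have hdi : ∀ t : ℝ, 1 ≤ t → HasDerivAt (fun s => F s i) (G (F t) i) t := by
      intro t ht
      exact (hasDerivAt_pi.mp (hderiv t ht)) i
    have hfi : Tendsto (fun t => F t i) atTop (nhds (v i)) :=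
      (tendsto_pi_nhds.mp hlim) i
    have hgi : Tendsto (fun t => G (F t) i) atTop (nhds (G v i)) :=
      (tendsto_pi_nhds.mp hGlim) i
    exact deriv_limit_zero _ _ _ _ hdi hfi hgi
  have : Matrix.vecMul v β - (v ⬝ᵥ β.mulVec c) • v = 0 := hzero
  linear_combination (norm := module) this
end
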